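/- Let (P_μ)_{μ∈𝒫(E)} be a nonlinear Markov transition kernel family on a measurable space (E,ℰ) satisfying the global nonlinear Dobrushin condition with constant α ∈ (0,1]. For μ, ν ∈ 𝒫(E) with μ ≠ ν, let η(dx) = (dμ/dν ∧ 1) ν(dx), where dμ/dν is the Radon–Nikodym derivative of the absolutely continuous part of μ with respect to ν. Then d_TV(P_μ(μ − η), P_ν(ν − η)) ≤ (1 − α) d_TV(μ,ν), where P_μ(μ − η) denotes the (nonnegative) measure B ↦ ∫_E P_μ(x,B)(μ − η)(dx). -/

import Mathlib

/-!
Let `η = (dμ/dν ∧ 1) ν`. Since `η ≤ μ` and `η ≤ ν`, the measures `μ - η` and `ν - η` have the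
same mass `m`, and `m ≤ d_TV(μ,ν)/2` because `μ B - ν B = m` on the set `B` that carries the
singular part of `μ` together with `{dμ/dν ≥ 1}`. Integrating the pointwise bound
`|P_μ(x,A) - P_ν(y,A)| ≤ 1 - α` first in `x` against `μ - η`, then in `y` against `ν - η`,
shows that the two image measures differ by at most `(1 - α) m` on every set `A`.
-/

open MeasureTheory ProbabilityTheory

/-- Total variation distance between finite measures (for measures of equal total mass this
is the total variation norm of the difference):
`d_TV(ρ₁,ρ₂) = 2 ⨆_{A measurable} |ρ₁(A) − ρ₂(A)|`. -/
noncomputable def dTV {E : Type*} [MeasurableSpace E] (μ ν : Measure E) : ℝ :=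
  2 * ⨆ A : {A : Set E // MeasurableSet A}, |(μ A.1).toReal - (ν A.1).toReal|

section TotalVariation

variable {E : Type*} [MeasurableSpace E]

lemma bddAbove_range_abs_sub_measureReal (μ ν : Measure E) [IsFiniteMeasure μ]
    [IsFiniteMeasure ν] :
    BddAbove (Set.range fun A : {A : Set E // MeasurableSet A} => |μ.real A.1 - ν.real A.1|) := by
  refine ⟨μ.real Set.univ + ν.real Set.univ, ?_⟩
  rintro _ ⟨A, rfl⟩
  have hμA : μ.real A.1 ≤ μ.real Set.univ := measureReal_mono (Set.subset_univ _)
  have hνA : ν.real A.1 ≤ ν.real Set.univ := measureReal_mono (Set.subset_univ _)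
  rw [abs_sub_le_iff]
  constructor <;> linarith [measureReal_nonneg (μ := μ) (s := A.1),
    measureReal_nonneg (μ := ν) (s := A.1)]

lemma dTV_eq_two_mul_iSup (μ ν : Measure E) :
    dTV μ ν = 2 * ⨆ A : {A : Set E // MeasurableSet A}, |μ.real A.1 - ν.real A.1| :=
  rfl

lemma abs_sub_measureReal_le_dTV (μ ν : Measure E) [IsFiniteMeasure μ] [IsFiniteMeasure ν]
    {A : Set E} (hA : MeasurableSet A) : |μ.real A - ν.real A| ≤ dTV μ ν / 2 := by
  have := le_ciSup (bddAbove_range_abs_sub_measureReal μ ν) ⟨A, hA⟩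
  rw [dTV_eq_two_mul_iSup]
  linarith

lemma dTV_le_of_forall_abs_sub_le {μ ν : Measure E} {c : ℝ}
    (h : ∀ A, MeasurableSet A → |μ.real A - ν.real A| ≤ c) : dTV μ ν ≤ 2 * c := by
  have : Nonempty {A : Set E // MeasurableSet A} := ⟨⟨∅, .empty⟩⟩
  have := ciSup_le fun A : {A : Set E // MeasurableSet A} => h A.1 A.2
  rw [dTV_eq_two_mul_iSup]
  linarith

end TotalVariation

section KernelCoupling

variable {X Y : Type*} [MeasurableSpace X] [MeasurableSpace Y]

lemma abs_integral_sub_mul_le {ρ : Measure X} [IsFiniteMeasure ρ] {f : X → ℝ}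
    (hf : Integrable f ρ) {a c : ℝ} (h : ∀ x, |f x - a| ≤ c) :
    |∫ x, f x ∂ρ - ρ.real Set.univ * a| ≤ c * ρ.real Set.univ := by
  rw [← smul_eq_mul, ← integral_const, ← integral_sub hf (integrable_const a)]
  exact norm_integral_le_of_norm_le_const
    (ae_of_all _ fun x => (Real.norm_eq_abs _).trans_le (h x))

lemma measureReal_bind_eq_integral (ρ : Measure X) (κ : Kernel X Y) [IsFiniteKernel κ]
    {A : Set Y} (hA : MeasurableSet A) : (ρ.bind κ).real A = ∫ x, (κ x).real A ∂ρ := by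
  rw [measureReal_def, Measure.bind_apply hA κ.aemeasurable,
    ← integral_toReal (κ.measurable_coe hA).aemeasurable (ae_of_all _ fun _ => measure_lt_top _ _)]
  rfl

lemma integrable_measureReal_kernel (ρ : Measure X) [IsFiniteMeasure ρ] (κ : Kernel X Y)
    [IsMarkovKernel κ] {A : Set Y} (hA : MeasurableSet A) :
    Integrable (fun x => (κ x).real A) ρ :=
  (integrable_const (1 : ℝ)).mono' (κ.measurable_coe hA).ennreal_toReal.aestronglyMeasurable
    (ae_of_all _ fun _ => by
      rw [Real.norm_eq_abs, abs_of_nonneg measureReal_nonneg]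
      exact measureReal_le_one)

lemma abs_measureReal_bind_sub_bind_le {ρ₁ ρ₂ : Measure X} [IsFiniteMeasure ρ₁]
    [IsFiniteMeasure ρ₂] (hmass : ρ₁ Set.univ = ρ₂ Set.univ) {κ₁ κ₂ : Kernel X Y}
    [IsMarkovKernel κ₁] [IsMarkovKernel κ₂] {c : ℝ} {A : Set Y} (hA : MeasurableSet A)
    (hκ : ∀ x y, |(κ₁ x).real A - (κ₂ y).real A| ≤ c) :
    |(ρ₁.bind κ₁).real A - (ρ₂.bind κ₂).real A| ≤ c * ρ₁.real Set.univ := by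
  set m := ρ₁.real Set.univ
  have hm : ρ₂.real Set.univ = m := by simp only [m, measureReal_def, hmass]
  rcases (measureReal_nonneg : 0 ≤ m).eq_or_lt with hm0 | hmpos
  · have hρ₁ : ρ₁ = 0 := Measure.measure_univ_eq_zero.mp ((measureReal_eq_zero_iff).mp hm0.symm)
    have hρ₂ : ρ₂ = 0 := Measure.measure_univ_eq_zero.mp (by simp [← hmass, hρ₁])
    subst hρ₁ hρ₂
    simp [m]
  rw [measureReal_bind_eq_integral _ _ hA, measureReal_bind_eq_integral _ _ hA]
  set I₁ := ∫ x, (κ₁ x).real A ∂ρ₁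
  have hinner : ∀ y, |m * (κ₂ y).real A - I₁| ≤ c * m := fun y => by
    rw [abs_sub_comm]
    exact abs_integral_sub_mul_le (integrable_measureReal_kernel ρ₁ κ₁ hA) (hκ · y)
  have houter := abs_integral_sub_mul_le
    ((integrable_measureReal_kernel ρ₂ κ₂ hA).const_mul m) hinner
  rw [integral_const_mul, hm, ← mul_sub, abs_mul, abs_of_pos hmpos, abs_sub_comm] at houter
  nlinarith

end KernelCoupling

section Overlap

variable {E : Type*} [MeasurableSpace E]

noncomputable def overlap (μ ν : Measure E) : Measure E :=
  ν.withDensity fun x => min (μ.rnDeriv ν x) 1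

lemma overlap_le_left (μ ν : Measure E) : overlap μ ν ≤ μ :=
  (withDensity_mono (ae_of_all _ fun _ => min_le_left _ _)).trans
    (Measure.withDensity_rnDeriv_le μ ν)

lemma overlap_le_right (μ ν : Measure E) : overlap μ ν ≤ ν :=
  (withDensity_mono (ae_of_all _ fun _ => min_le_right _ _)).trans withDensity_one.le

instance (μ ν : Measure E) [IsFiniteMeasure ν] : IsFiniteMeasure (overlap μ ν) :=
  isFiniteMeasure_of_le ν (overlap_le_right μ ν)

lemma sub_overlap_apply_univ_eq {μ ν : Measure E} [IsFiniteMeasure ν]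
    (h : μ Set.univ = ν Set.univ) :
    (μ - overlap μ ν) Set.univ = (ν - overlap μ ν) Set.univ := by
  rw [Measure.sub_apply .univ (overlap_le_left μ ν), Measure.sub_apply .univ (overlap_le_right μ ν),
    h]

lemma exists_measure_add_overlap_eq (μ ν : Measure E) [μ.HaveLebesgueDecomposition ν] :
    ∃ B, MeasurableSet B ∧ μ B + overlap μ ν Set.univ = μ Set.univ + ν B := by
  obtain ⟨s, hs, hξs, hνs⟩ := Measure.mutuallySingular_singularPart μ ν
  set f := μ.rnDeriv ν
  set T : Set E := {x | 1 ≤ f x}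
  have hT : MeasurableSet T := measurableSet_le measurable_const (μ.measurable_rnDeriv ν)
  have hdecomp : μ = μ.singularPart ν + ν.withDensity f := μ.haveLebesgueDecomposition_add ν
  refine ⟨T ∪ sᶜ, hT.union hs.compl, ?_⟩
  have hBν : (T ∪ sᶜ : Set E) =ᵐ[ν] T := union_ae_eq_left_of_ae_eq_empty (ae_eq_empty.mpr hνs)
  have hBξ : μ.singularPart ν (T ∪ sᶜ) = μ.singularPart ν Set.univ := by
    refine measure_congr (ae_eq_univ.mpr (measure_mono_null ?_ hξs))
    rw [Set.compl_union, compl_compl]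
    exact Set.inter_subset_right
  have hoverlap : overlap μ ν Set.univ = ν T + ∫⁻ x in Tᶜ, f x ∂ν := by
    rw [overlap, withDensity_apply _ .univ, Measure.restrict_univ, ← lintegral_add_compl _ hT,
      setLIntegral_congr_fun hT fun x (hx : 1 ≤ f x) => min_eq_right hx, setLIntegral_one,
      setLIntegral_congr_fun hT.compl fun x (hx : ¬ 1 ≤ f x) => min_eq_left (not_le.mp hx).le]
  have hμ : μ Set.univ = μ.singularPart ν Set.univ + (∫⁻ x in T, f x ∂ν + ∫⁻ x in Tᶜ, f x ∂ν) := by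
    conv_lhs => rw [hdecomp]
    rw [Measure.add_apply, withDensity_apply _ .univ, Measure.restrict_univ,
      lintegral_add_compl _ hT]
  have hμB : μ (T ∪ sᶜ) = μ.singularPart ν Set.univ + ∫⁻ x in T, f x ∂ν := by
    conv_lhs => rw [hdecomp]
    rw [Measure.add_apply, hBξ, withDensity_apply _ (hT.union hs.compl), setLIntegral_congr hBν]
  rw [hμB, hoverlap, hμ, measure_congr hBν]
  ring

lemma measureReal_sub_overlap_le_dTV (μ ν : Measure E) [IsFiniteMeasure μ] [IsFiniteMeasure ν] :
    (μ - overlap μ ν).real Set.univ ≤ dTV μ ν / 2 := by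
  obtain ⟨B, hB, hadd⟩ := exists_measure_add_overlap_eq μ ν
  have hsub : (μ - overlap μ ν).real Set.univ = μ.real B - ν.real B := by
    have hreal := congrArg ENNReal.toReal hadd
    rw [ENNReal.toReal_add (measure_ne_top _ _) (measure_ne_top _ _),
      ENNReal.toReal_add (measure_ne_top _ _) (measure_ne_top _ _)] at hreal
    rw [measureReal_def, Measure.sub_apply .univ (overlap_le_left μ ν),
      ENNReal.toReal_sub_of_le (overlap_le_left μ ν _) (measure_ne_top _ _)]
    simp only [measureReal_def]
    linarith
  rw [hsub]
  exact (le_abs_self _).trans (abs_sub_measureReal_le_dTV μ ν hB)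

end Overlap

theorem stmt5_general {E : Type*} [MeasurableSpace E]
    (P : Measure E → Kernel E E) (hMarkov : ∀ μ, IsMarkovKernel (P μ))
    (α : ℝ) (hα1 : α ≤ 1)
    (hDobr : ∀ μ ν : Measure E, IsProbabilityMeasure μ → IsProbabilityMeasure ν →
      ∀ x y : E, dTV ((P μ) x) ((P ν) y) ≤ 2 * (1 - α))
    (μ ν : Measure E) (hμ : IsProbabilityMeasure μ) (hν : IsProbabilityMeasure ν)
    (η : Measure E) (hη : η = ν.withDensity (fun x => min (μ.rnDeriv ν x) 1)) :
    dTV ((μ - η).bind ⇑(P μ)) ((ν - η).bind ⇑(P ν)) ≤ (1 - α) * dTV μ ν := by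
  rw [show η = overlap μ ν from hη]
  have := hMarkov μ
  have := hMarkov ν
  have hkernel : ∀ x y A, MeasurableSet A → |(P μ x).real A - (P ν y).real A| ≤ 1 - α :=
    fun x y A hA => by
      linarith [abs_sub_measureReal_le_dTV (P μ x) (P ν y) hA, hDobr μ ν hμ hν x y]
  have hmass := sub_overlap_apply_univ_eq (μ := μ) (ν := ν) (by simp)
  calc _ ≤ 2 * ((1 - α) * (μ - overlap μ ν).real Set.univ) :=
        dTV_le_of_forall_abs_sub_le fun A hA =>
          abs_measureReal_bind_sub_bind_le hmass hA fun x y => hkernel x y A hA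
    _ ≤ (1 - α) * dTV μ ν := by
        nlinarith [measureReal_sub_overlap_le_dTV μ ν]

/-- With `η(dx) = (dμ/dν ∧ 1) ν(dx)` and `μ ≠ ν`, under the global nonlinear Dobrushin
condition with constant `α ∈ (0,1]` one has
`d_TV(P_μ (μ−η), P_ν (ν−η)) ≤ (1 − α) d_TV(μ,ν)`. -/
theorem stmt5 {E : Type*} [MeasurableSpace E]
    (P : Measure E → Kernel E E) (hMarkov : ∀ μ, IsMarkovKernel (P μ))
    (α : ℝ) (hα0 : 0 < α) (hα1 : α ≤ 1)
    (hDobr : ∀ μ ν : Measure E, IsProbabilityMeasure μ → IsProbabilityMeasure ν →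
      ∀ x y : E, dTV ((P μ) x) ((P ν) y) ≤ 2 * (1 - α))
    (μ ν : Measure E) (hμ : IsProbabilityMeasure μ) (hν : IsProbabilityMeasure ν)
    (hne : μ ≠ ν)
    (η : Measure E) (hη : η = ν.withDensity (fun x => min (μ.rnDeriv ν x) 1)) :
    dTV ((μ - η).bind ⇑(P μ)) ((ν - η).bind ⇑(P ν)) ≤ (1 - α) * dTV μ ν :=
  stmt5_general P hMarkov α hα1 hDobr μ ν hμ hν η hη
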